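/- arXiv:2204.13466 — 4 statements merged into one kernel-verified Lean document; each statement's English description precedes it below -/
import Mathlib

section
/- For every clustering system 𝒞 on a finite set X there exists a cluster network N on X with 𝒞_N = 𝒞, and N is unique up to a digraph isomorphism fixing every element of X; equivalently, N is the unique semi-regular, separated, phylogenetic network on X with clustering system 𝒞. -/
/-!
The cluster network of `𝒞` is the Hasse diagram of the following poset: one tree vertex
`(C, false)` for each `C ∈ 𝒞`, and one hybrid vertex `(C, true)` for each `C ∈ 𝒞` with two
distinct upper covers in `𝒞`, ordered lexicographically, so that the hybrid vertex of `C` sits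
directly above its tree vertex.

In a shortcut-free network the arcs are exactly the covering pairs of the reachability order,
so a leaf-preserving bijection that preserves reachability is already an isomorphism. For a
cluster network `N`, the map `v ↦ (C(v), v is hybrid)` is such a bijection onto the poset
above: (PCC) and axiom (ii) turn reachability into the lexicographic order, and axioms (iii)
and (iv) match the hybrid vertices with the clusters having two upper covers. Semi-regular,
separated, phylogenetic networks satisfy the cluster network axioms, so they are covered too.
-/
namespace PhyloNet

/-- A (rooted) network on a set `X` of taxa: a finite directed acyclic graph with a
unique vertex of indegree 0 (the root), whose vertices of outdegree 0 (the leaves)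
are exactly the elements of `X` (via the injection `leafEmb`). -/
structure Network (X : Type) where
  V : Type
  [fintypeV : Fintype V]
  E : V → V → Prop
  leafEmb : X → V
  leafEmb_inj : Function.Injective leafEmb
  acyclic : ∀ u v : V, E u v → ¬ Relation.ReflTransGen E v u
  root_unique : ∃! r : V, ∀ u : V, ¬ E u r
  leaf_iff : ∀ v : V, (∀ w : V, ¬ E v w) ↔ ∃ x : X, leafEmb x = v

attribute [instance] Network.fintypeV

variable {X : Type}

namespace Network

/-- `reach u v` : there is a directed path (possibly trivial) from `u` to `v`,
i.e. `v ⪯ u`. -/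
def reach (N : Network X) : N.V → N.V → Prop := Relation.ReflTransGen N.E

/-- The cluster of a vertex: the set of leaves reachable from it. -/
def cluster (N : Network X) (v : N.V) : Set X := {x | N.reach v (N.leafEmb x)}

/-- The clustering system of a network. -/
def CS (N : Network X) : Set (Set X) := Set.range N.cluster

noncomputable def inDeg (N : Network X) (v : N.V) : ℕ := {u | N.E u v}.ncard
noncomputable def outDeg (N : Network X) (v : N.V) : ℕ := {w | N.E v w}.ncard

def IsHybrid (N : Network X) (v : N.V) : Prop := 1 < N.inDeg v
def IsTreeVertex (N : Network X) (v : N.V) : Prop := N.inDeg v ≤ 1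
def IsLeaf (N : Network X) (v : N.V) : Prop := ∀ w : N.V, ¬ N.E v w

/-- The arc `(u,w)` is a shortcut: `w ≺ v` for some child `v ≠ w` of `u`. -/
def IsShortcut (N : Network X) (u w : N.V) : Prop :=
  N.E u w ∧ ∃ v : N.V, N.E u v ∧ v ≠ w ∧ N.reach v w

def ShortcutFree (N : Network X) : Prop := ∀ u w : N.V, ¬ N.IsShortcut u w

/-- Path-cluster comparability. -/
def PCC (N : Network X) : Prop :=
  ∀ u v : N.V, (N.reach u v ∨ N.reach v u) ↔
    (N.cluster u ⊆ N.cluster v ∨ N.cluster v ⊆ N.cluster u)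

def SemiRegular (N : Network X) : Prop := N.ShortcutFree ∧ N.PCC

/-- `N` is regular iff `v ↦ C(v)` is a digraph isomorphism onto the Hasse diagram
of `𝒞_N` (ordered by inclusion). -/
def Regular (N : Network X) : Prop :=
  Function.Injective N.cluster ∧
  ∀ u v : N.V, N.E u v ↔
    (N.cluster v ⊂ N.cluster u ∧
      ¬ ∃ w : N.V, N.cluster v ⊂ N.cluster w ∧ N.cluster w ⊂ N.cluster u)

def Separated (N : Network X) : Prop := ∀ v : N.V, N.IsHybrid v → N.outDeg v = 1

def Phylogenetic (N : Network X) : Prop := ¬ ∃ v : N.V, N.outDeg v = 1 ∧ N.inDeg v ≤ 1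

def Binary (N : Network X) : Prop :=
  (∀ v : N.V, N.IsTreeVertex v → (N.IsLeaf v ∨ N.outDeg v = 2)) ∧
  (∀ v : N.V, N.IsHybrid v → N.inDeg v = 2 ∧ N.outDeg v = 1)

def TreeChild (N : Network X) : Prop :=
  ∀ v : N.V, ¬ N.IsLeaf v → ∃ u : N.V, N.E v u ∧ N.inDeg u = 1

/-- The underlying undirected (simple) graph of a network. -/
def UG (N : Network X) : SimpleGraph N.V where
  Adj u v := u ≠ v ∧ (N.E u v ∨ N.E v u)
  symm := ⟨fun _ _ h => ⟨Ne.symm h.1, Or.symm h.2⟩⟩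
  loopless := ⟨fun _ h => h.1 rfl⟩

/-- A set of vertices is biconnected if it induces a connected undirected graph
with no cutvertex. -/
def IsBiconn (N : Network X) (B : Set N.V) : Prop :=
  (N.UG.induce B).Connected ∧ ∀ v ∈ B, (N.UG.induce (B \ {v})).Preconnected

/-- A block: a maximal biconnected set of vertices. -/
def IsBlock (N : Network X) (B : Set N.V) : Prop :=
  N.IsBiconn B ∧ ∀ B' : Set N.V, B ⊆ B' → N.IsBiconn B' → B' = B

/-- The set `B` contains an undirected cycle (`B` is a non-trivial block when it is
a block). -/
def HasCycleIn (N : Network X) (B : Set N.V) : Prop :=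
  ∃ (v : N.V) (c : N.UG.Walk v v), c.IsCycle ∧ ∀ w ∈ c.support, w ∈ B

/-- Level-1: each block contains at most one hybrid vertex that is not
`⪯`-maximal in the block. -/
def Level1 (N : Network X) : Prop :=
  ∀ B : Set N.V, N.IsBlock B →
    Set.Subsingleton {v : N.V | v ∈ B ∧ N.IsHybrid v ∧ ∃ u ∈ B, u ≠ v ∧ N.reach u v}

/-- The set `B` (with the edges of the underlying undirected graph between its
members) is exactly an undirected cycle. -/
def IsCycleSet (N : Network X) (B : Set N.V) : Prop :=
  ∃ (v : N.V) (c : N.UG.Walk v v), c.IsCycle ∧ (∀ w : N.V, w ∈ c.support ↔ w ∈ B) ∧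
    ∀ u w : N.V, (N.UG.Adj u w ∧ u ∈ B ∧ w ∈ B) ↔ s(u, w) ∈ c.edges

/-- A galled tree: every non-trivial block is an undirected cycle. -/
def GalledTree (N : Network X) : Prop :=
  ∀ B : Set N.V, N.IsBlock B → N.HasCycleIn B → N.IsCycleSet B

/-- Quasi-binary: hybrid vertices have indegree 2 and outdegree 1, and the
`⪯`-maximal vertex of every non-trivial block has outdegree 2. -/
def QuasiBinary (N : Network X) : Prop :=
  (∀ v : N.V, N.IsHybrid v → N.inDeg v = 2 ∧ N.outDeg v = 1) ∧
  ∀ B : Set N.V, N.IsBlock B → N.HasCycleIn B →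
    ∀ v ∈ B, (∀ u ∈ B, N.reach u v → u = v) → N.outDeg v = 2

/-- `LCA A`: the `⪯`-minimal vertices among the common ancestors of `A`. -/
def LCA (N : Network X) (A : Set X) : Set N.V :=
  {v : N.V | A ⊆ N.cluster v ∧ ∀ u : N.V, A ⊆ N.cluster u → N.reach v u → u = v}

/-- An lca-network: every nonempty set of leaves has a unique least common
ancestor. -/
def LcaNetwork (N : Network X) : Prop :=
  ∀ A : Set X, A.Nonempty → ∃ v : N.V, N.LCA A = {v}

/-- A strong lca-network. -/
def StrongLca (N : Network X) : Prop :=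
  N.LcaNetwork ∧
  ∀ A : Set X, A.Nonempty → ∃ x ∈ A, ∃ y ∈ A, N.LCA ({x, y} : Set X) = N.LCA A

/-- Cluster networks in the sense of Huson & Rupp. -/
def ClusterNetwork (N : Network X) : Prop :=
  N.PCC ∧
  (∀ u v : N.V, N.cluster u = N.cluster v ↔
    (u = v ∨ (N.IsHybrid v ∧ N.E v u) ∨ (N.IsHybrid u ∧ N.E u v))) ∧
  (∀ u v : N.V, N.E v u →
    ¬ ∃ w : N.V, N.cluster u ⊂ N.cluster w ∧ N.cluster w ⊂ N.cluster v) ∧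
  (∀ v : N.V, N.IsHybrid v →
    ∃ u : N.V, N.E v u ∧ (∀ w : N.V, N.E v w → w = u) ∧ N.IsTreeVertex u)

/-- The multiplicity of a cluster in the cluster multiset `𝓜_N`. -/
noncomputable def multiplicity (N : Network X) (C : Set X) : ℕ :=
  Nat.card {v : N.V // N.cluster v = C}

/-- Isomorphism of networks on the same leaf set `X`, fixing every leaf. -/
def Isomorphic (N N' : Network X) : Prop :=
  ∃ φ : N.V ≃ N'.V, (∀ u v : N.V, N.E u v ↔ N'.E (φ u) (φ v)) ∧
    ∀ x : X, φ (N.leafEmb x) = N'.leafEmb x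

end Network

/-- A clustering system on `X`. -/
def IsClusteringSystem {X : Type} (𝒞 : Set (Set X)) : Prop :=
  ∅ ∉ 𝒞 ∧ Set.univ ∈ 𝒞 ∧ ∀ x : X, {x} ∈ 𝒞

/-- Two sets overlap if `A ∩ B ∉ {∅, A, B}`. -/
def Overlap {X : Type} (A B : Set X) : Prop :=
  (A ∩ B).Nonempty ∧ A ∩ B ≠ A ∧ A ∩ B ≠ B

/-- Closed (under pairwise nonempty intersections). -/
def IsClosedCS {X : Type} (𝒞 : Set (Set X)) : Prop :=
  ∀ A ∈ 𝒞, ∀ B ∈ 𝒞, (A ∩ B).Nonempty → A ∩ B ∈ 𝒞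

/-- Property (L). -/
def PropertyL {X : Type} (𝒞 : Set (Set X)) : Prop :=
  ∀ C₁ ∈ 𝒞, ∀ C₂ ∈ 𝒞, ∀ C₃ ∈ 𝒞, Overlap C₁ C₂ → Overlap C₁ C₃ → C₁ ∩ C₂ = C₁ ∩ C₃

/-- Weak hierarchy. -/
def WeakHierarchy {X : Type} (𝒞 : Set (Set X)) : Prop :=
  ∀ C₁ ∈ 𝒞, ∀ C₂ ∈ 𝒞, ∀ C₃ ∈ 𝒞,
    C₁ ∩ C₂ ∩ C₃ = C₁ ∩ C₂ ∨ C₁ ∩ C₂ ∩ C₃ = C₁ ∩ C₃ ∨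
    C₁ ∩ C₂ ∩ C₃ = C₂ ∩ C₃ ∨ C₁ ∩ C₂ ∩ C₃ = ∅

/-- Property (N3O): no three distinct pairwise overlapping clusters. -/
def N3O {X : Type} (𝒞 : Set (Set X)) : Prop :=
  ¬ ∃ C₁ ∈ 𝒞, ∃ C₂ ∈ 𝒞, ∃ C₃ ∈ 𝒞,
    C₁ ≠ C₂ ∧ C₁ ≠ C₃ ∧ C₂ ≠ C₃ ∧ Overlap C₁ C₂ ∧ Overlap C₁ C₃ ∧ Overlap C₂ C₃

/-- Property (2-Inc). -/
def TwoInc {X : Type} (𝒞 : Set (Set X)) : Prop :=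
  ∀ C ∈ 𝒞,
    {A : Set X | A ∈ 𝒞 ∧ A ⊂ C ∧ ∀ B ∈ 𝒞, B ⊂ C → A ⊆ B → A = B}.ncard ≤ 2 ∧
    {A : Set X | A ∈ 𝒞 ∧ C ⊂ A ∧ ∀ B ∈ 𝒞, C ⊂ B → B ⊆ A → A = B}.ncard ≤ 2

/-- The intersection closure: all nonempty intersections of nonempty subfamilies. -/
def interClosure {X : Type} (𝒞 : Set (Set X)) : Set (Set X) :=
  {A : Set X | A.Nonempty ∧ ∃ S : Set (Set X), S ⊆ 𝒞 ∧ S.Nonempty ∧ A = ⋂₀ S}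

theorem isMax_iff_forall_not_covBy {α : Type*} [Preorder α] [IsStronglyAtomic α] {a : α} :
    IsMax a ↔ ∀ b, ¬ a ⋖ b := by
  refine ⟨fun h b hab => h.not_lt hab.lt, fun h => isMax_iff_forall_not_lt.2 fun b hab => ?_⟩
  obtain ⟨c, hac, -⟩ := exists_covBy_le_of_lt hab
  exact h c hac

theorem isMin_iff_forall_not_covBy {α : Type*} [Preorder α] [IsStronglyCoatomic α] {a : α} :
    IsMin a ↔ ∀ b, ¬ b ⋖ a := by
  refine ⟨fun h b hba => h.not_lt hba.lt, fun h => isMin_iff_forall_not_lt.2 fun b hba => ?_⟩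
  obtain ⟨c, -, hca⟩ := exists_le_covBy_of_lt hba
  exact h c hca

namespace Network

variable (N : Network X)

lemma reach_antisymm {u v : N.V} (huv : N.reach u v) (hvu : N.reach v u) : u = v := by
  rcases Relation.ReflTransGen.cases_head huv with rfl | ⟨w, huw, hwv⟩
  · rfl
  · exact (N.acyclic u w huw (hwv.trans hvu)).elim

lemma ne_of_arc {u v : N.V} (h : N.E u v) : u ≠ v :=
  fun huv => N.acyclic u v h (huv ▸ .refl)

lemma cluster_subset_of_reach {u v : N.V} (h : N.reach u v) : N.cluster v ⊆ N.cluster u :=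
  fun _ hx => h.trans hx

lemma cluster_subset_of_arc {u v : N.V} (h : N.E u v) : N.cluster v ⊆ N.cluster u :=
  N.cluster_subset_of_reach (.single h)

lemma not_arc_leafEmb (x : X) (w : N.V) : ¬ N.E (N.leafEmb x) w :=
  (N.leaf_iff _).2 ⟨x, rfl⟩ w

lemma cluster_leafEmb (x : X) : N.cluster (N.leafEmb x) = {x} := by
  ext y
  refine ⟨fun hy => ?_, fun hy => hy ▸ .refl⟩
  rcases Relation.ReflTransGen.cases_head hy with h | ⟨w, hw, -⟩
  · exact N.leafEmb_inj h.symm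
  · exact (N.not_arc_leafEmb x w hw).elim

lemma cluster_eq_of_unique_child {v u : N.V} (hu : N.E v u) (huniq : ∀ w, N.E v w → w = u) :
    N.cluster v = N.cluster u := by
  refine (Set.Subset.antisymm ?_ (N.cluster_subset_of_arc hu))
  intro x hx
  rcases Relation.ReflTransGen.cases_head hx with h | ⟨w, hw, hwx⟩
  · exact (N.not_arc_leafEmb x u (h ▸ hu)).elim
  · exact huniq w hw ▸ hwx

lemma isTreeVertex_iff_not_isHybrid {v : N.V} : N.IsTreeVertex v ↔ ¬ N.IsHybrid v :=
  not_lt.symm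

lemma exists_parents_of_isHybrid {v : N.V} (h : N.IsHybrid v) :
    ∃ p q, N.E p v ∧ N.E q v ∧ p ≠ q := by
  obtain ⟨p, hp, q, hq, hpq⟩ := (Set.one_lt_ncard (Set.toFinite _)).1 h
  exact ⟨p, q, hp, hq, hpq⟩

lemma parent_unique {v : N.V} (h : ¬ N.IsHybrid v) {p q : N.V} (hp : N.E p v)
    (hq : N.E q v) : p = q :=
  (Set.ncard_le_one_iff (Set.toFinite _)).1 (not_lt.1 h) hp hq

lemma arc_iff_of_shortcutFree (hN : N.ShortcutFree) {u v : N.V} :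
    N.E u v ↔ u ≠ v ∧ N.reach u v ∧ ∀ w, N.reach u w → N.reach w v → w = u ∨ w = v := by
  refine ⟨fun huv => ⟨N.ne_of_arc huv, .single huv, fun w huw hwv => ?_⟩, ?_⟩
  · rcases Relation.ReflTransGen.cases_head huw with h | ⟨c, huc, hcw⟩
    · exact .inl h.symm
    · by_cases hcv : c = v
      · exact .inr (N.reach_antisymm hwv (hcv ▸ hcw))
      · exact (hN u v ⟨huv, c, huc, hcv, hcw.trans hwv⟩).elim
  · rintro ⟨hne, huv, hbetween⟩
    rcases Relation.ReflTransGen.cases_head huv with h | ⟨c, huc, hcv⟩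
    · exact (hne h).elim
    · rcases hbetween c (.single huc) hcv with rfl | rfl
      · exact (N.ne_of_arc huc rfl).elim
      · exact huc

end Network

theorem Network.Isomorphic.of_reach_equiv {N N' : Network X} (hN : N.ShortcutFree)
    (hN' : N'.ShortcutFree) (φ : N.V ≃ N'.V)
    (hφ : ∀ u v, N.reach u v ↔ N'.reach (φ u) (φ v))
    (hleaf : ∀ x, φ (N.leafEmb x) = N'.leafEmb x) : N.Isomorphic N' := by
  refine ⟨φ, fun u v => ?_, hleaf⟩
  rw [N.arc_iff_of_shortcutFree hN, N'.arc_iff_of_shortcutFree hN', φ.forall_congr_left]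
  simp only [hφ, φ.apply_symm_apply, φ.injective.ne_iff, Equiv.symm_apply_eq]

section Hasse

variable (P : Type) [Fintype P] [PartialOrder P]

-- Reducible, so that lemmas about elements of `P` apply to its vertices.
abbrev hasseNetwork (leaf : X → P) (hleaf : Function.Injective leaf) (hmax : ∃! r : P, IsMax r)
    (hmin : ∀ p : P, IsMin p ↔ ∃ x, leaf x = p) : Network X where
  V := P
  E u v := v ⋖ u
  leafEmb := leaf
  leafEmb_inj := hleaf
  acyclic u v h hvu := h.lt.not_ge <| by
    classical
    let := Fintype.toLocallyFiniteOrder (α := P)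
    exact le_iff_reflTransGen_covBy.2 (Relation.reflTransGen_swap.1 hvu)
  root_unique := by simpa only [isMax_iff_forall_not_covBy] using hmax
  leaf_iff v := by simpa only [isMin_iff_forall_not_covBy] using hmin v

variable {P} {leaf : X → P} {hleaf : Function.Injective leaf} {hmax : ∃! r : P, IsMax r}
  {hmin : ∀ p : P, IsMin p ↔ ∃ x, leaf x = p}

lemma hasseNetwork_reach {u v : P} :
    (hasseNetwork P leaf hleaf hmax hmin).reach u v ↔ v ≤ u := by
  classical
  let := Fintype.toLocallyFiniteOrder (α := P)
  change Relation.ReflTransGen (fun u v : P => v ⋖ u) u v ↔ v ≤ u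
  exact (le_iff_reflTransGen_covBy.trans Relation.reflTransGen_swap.symm).symm

lemma hasseNetwork_cluster (v : P) :
    (hasseNetwork P leaf hleaf hmax hmin).cluster v = {x | leaf x ≤ v} :=
  Set.ext fun _ => hasseNetwork_reach

lemma hasseNetwork_shortcutFree : (hasseNetwork P leaf hleaf hmax hmin).ShortcutFree :=
  fun _ _ ⟨hwu, _, hvu, hne, hwv⟩ => hne <| ((hasseNetwork_reach.1 hwv).eq_of_not_lt
    fun hlt => hwu.2 hlt hvu.lt).symm

end Hasse

section ClusterPoset

variable {𝒞 : Set (Set X)}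

def IsHybridCluster (C : 𝒞) : Prop :=
  ∃ D₁ D₂ : 𝒞, C ⋖ D₁ ∧ C ⋖ D₂ ∧ D₁ ≠ D₂

@[ext]
structure ClusterVertex (𝒞 : Set (Set X)) where
  cluster : 𝒞
  hybrid : Bool
  isHybridCluster_of_hybrid : hybrid = true → IsHybridCluster cluster

namespace ClusterVertex

lemma toLex_injective :
    Function.Injective fun v : ClusterVertex 𝒞 => toLex (v.cluster, v.hybrid) :=
  fun _ _ h => ClusterVertex.ext (congrArg (·.1) h) (congrArg (·.2) h)

instance : PartialOrder (ClusterVertex 𝒞) := PartialOrder.lift _ toLex_injective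

instance [Finite X] : Finite (ClusterVertex 𝒞) :=
  Finite.of_injective (fun v => (v.cluster, v.hybrid)) toLex_injective

noncomputable instance [Finite X] : Fintype (ClusterVertex 𝒞) := Fintype.ofFinite _

def tree (C : 𝒞) : ClusterVertex 𝒞 := ⟨C, false, Bool.false_ne_true.elim⟩

variable {u v : ClusterVertex 𝒞}

lemma le_iff : u ≤ v ↔ u.cluster < v.cluster ∨ u.cluster = v.cluster ∧ u.hybrid ≤ v.hybrid :=
  Prod.Lex.toLex_le_toLex

lemma lt_iff : u < v ↔ u.cluster < v.cluster ∨ u.cluster = v.cluster ∧ u.hybrid < v.hybrid :=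
  Prod.Lex.toLex_lt_toLex

lemma lt_iff_of_cluster_eq (h : u.cluster = v.cluster) :
    u < v ↔ u.hybrid = false ∧ v.hybrid = true := by
  simp [lt_iff, h, Bool.lt_iff]

lemma cluster_mono (h : u ≤ v) : u.cluster ≤ v.cluster :=
  (le_iff.1 h).elim le_of_lt (·.1.le)

lemma covBy_iff : u ⋖ v ↔
    (u.cluster = v.cluster ∧ u.hybrid = false ∧ v.hybrid = true) ∨
    (u.cluster ⋖ v.cluster ∧ v.hybrid = false ∧
      (u.hybrid = true ↔ IsHybridCluster u.cluster)) := by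
  constructor
  · intro h
    rcases lt_iff.1 h.lt with hlt | ⟨heq, hb⟩
    · refine .inr ⟨⟨hlt, fun E huE hEv => h.2 (c := tree E) (lt_iff.2 (.inl huE))
        (lt_iff.2 (.inl hEv))⟩, ?_, ⟨u.isHybridCluster_of_hybrid, fun hC => ?_⟩⟩
      · by_contra hv
        have hv' : tree v.cluster < v :=
          lt_iff.2 (.inr ⟨rfl, Bool.lt_iff.2 ⟨rfl, by simpa using hv⟩⟩)
        exact h.2 (c := tree v.cluster) (lt_iff.2 (.inl hlt)) hv'
      · by_contra hu
        have hu' : u < ⟨u.cluster, true, fun _ => hC⟩ :=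
          lt_iff.2 (.inr ⟨rfl, Bool.lt_iff.2 ⟨by simpa using hu, rfl⟩⟩)
        exact h.2 hu' (lt_iff.2 (.inl hlt))
    · exact .inl ⟨heq, Bool.lt_iff.1 hb⟩
  · rintro (⟨heq, hu, hv⟩ | ⟨hcov, hv, hu⟩)
    · refine ⟨(lt_iff_of_cluster_eq heq).2 ⟨hu, hv⟩, fun w huw hwv => ?_⟩
      have hw : u.cluster = w.cluster :=
        le_antisymm (cluster_mono huw.le) (heq ▸ cluster_mono hwv.le)
      exact Bool.false_ne_true <| ((lt_iff_of_cluster_eq (hw.symm.trans heq)).1 hwv).1.symm.trans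
        ((lt_iff_of_cluster_eq hw).1 huw).2
    · refine ⟨lt_iff.2 (.inl hcov.lt), fun w huw hwv => ?_⟩
      rcases (cluster_mono huw.le).lt_or_eq with hlt | heq
      · rcases (cluster_mono hwv.le).lt_or_eq with hlt' | heq'
        · exact hcov.2 hlt hlt'
        · exact Bool.false_ne_true (hv.symm.trans ((lt_iff_of_cluster_eq heq').1 hwv).2)
      · obtain ⟨hu', hw⟩ := (lt_iff_of_cluster_eq heq).1 huw
        exact Bool.false_ne_true (hu'.symm.trans (hu.2 (heq ▸ w.isHybridCluster_of_hybrid hw)))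

lemma eq_tree_of_covBy (h : u ⋖ v) (hv : v.hybrid = true) : u = tree v.cluster := by
  rcases covBy_iff.1 h with ⟨hc, hu, -⟩ | ⟨-, hv', -⟩
  · exact ClusterVertex.ext hc hu
  · exact (Bool.false_ne_true (hv'.symm.trans hv)).elim

lemma subsingleton_covBy (hv : v.hybrid = false) : {u | v ⋖ u}.Subsingleton := by
  have cover (u) (h : v ⋖ u) :
      (u.cluster = v.cluster ∧ u.hybrid = true ∧ IsHybridCluster v.cluster) ∨
        (v.cluster ⋖ u.cluster ∧ u.hybrid = false ∧ ¬ IsHybridCluster v.cluster) := by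
    rcases covBy_iff.1 h with ⟨hc, -, hu⟩ | ⟨hc, hu, hC⟩
    · exact .inl ⟨hc.symm, hu, hc ▸ u.isHybridCluster_of_hybrid hu⟩
    · exact .inr ⟨hc, hu, by simpa [hv] using hC⟩
  intro a ha b hb
  rcases cover a ha with ⟨hca, hha, hC⟩ | ⟨hca, hha, hC⟩ <;>
    rcases cover b hb with ⟨hcb, hhb, hC'⟩ | ⟨hcb, hhb, hC'⟩
  · exact ClusterVertex.ext (hca.trans hcb.symm) (hha.trans hhb.symm)
  · exact (hC' hC).elim
  · exact (hC hC').elim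
  · by_contra hab
    exact hC ⟨a.cluster, b.cluster, hca, hcb,
      fun h => hab (ClusterVertex.ext h (hha.trans hhb.symm))⟩

lemma exists_covBy_ne (hv : v.hybrid = true) : ∃ a b, v ⋖ a ∧ v ⋖ b ∧ a ≠ b := by
  obtain ⟨D₁, D₂, h₁, h₂, hne⟩ := v.isHybridCluster_of_hybrid hv
  have cover {D} (hD : v.cluster ⋖ D) : v ⋖ tree D :=
    covBy_iff.2 (.inr ⟨hD, rfl, iff_of_true hv (v.isHybridCluster_of_hybrid hv)⟩)
  exact ⟨tree D₁, tree D₂, cover h₁, cover h₂, fun h => hne (congrArg cluster h)⟩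

lemma le_or_le_iff : u ≤ v ∨ v ≤ u ↔ u.cluster ≤ v.cluster ∨ v.cluster ≤ u.cluster := by
  have of_le {a b : ClusterVertex 𝒞} (h : a.cluster ≤ b.cluster) : a ≤ b ∨ b ≤ a := by
    rcases h.lt_or_eq with hlt | heq
    · exact .inl (le_iff.2 (.inl hlt))
    · exact (le_total a.hybrid b.hybrid).imp (fun hh => le_iff.2 (.inr ⟨heq, hh⟩))
        (fun hh => le_iff.2 (.inr ⟨heq.symm, hh⟩))
  refine ⟨Or.imp cluster_mono cluster_mono, ?_⟩
  rintro (h | h)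
  · exact of_le h
  · exact (of_le h).symm

lemma cluster_eq_iff : u.cluster = v.cluster ↔
    u = v ∨ (v.hybrid = true ∧ u ⋖ v) ∨ (u.hybrid = true ∧ v ⋖ u) := by
  constructor
  · intro h
    cases hu : u.hybrid <;> cases hv : v.hybrid
    · exact .inl (ClusterVertex.ext h (hu.trans hv.symm))
    · exact .inr (.inl ⟨rfl, covBy_iff.2 (.inl ⟨h, hu, hv⟩)⟩)
    · exact .inr (.inr ⟨rfl, covBy_iff.2 (.inl ⟨h.symm, hv, hu⟩)⟩)
    · exact .inl (ClusterVertex.ext h (hu.trans hv.symm))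
  · rintro (rfl | ⟨hv, huv⟩ | ⟨hu, hvu⟩)
    · rfl
    · rw [eq_tree_of_covBy huv hv]
      rfl
    · rw [eq_tree_of_covBy hvu hu]
      rfl

end ClusterVertex

end ClusterPoset

section CanonicalNetwork

variable {𝒞 : Set (Set X)}

namespace IsClusteringSystem

variable (h𝒞 : IsClusteringSystem 𝒞)

lemma isTop_univ : IsTop (⟨Set.univ, h𝒞.2.1⟩ : 𝒞) :=
  fun _ => Set.subset_univ _

lemma not_isHybridCluster_univ : ¬ IsHybridCluster (⟨Set.univ, h𝒞.2.1⟩ : 𝒞) :=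
  fun ⟨D, _, hD, _⟩ => not_lt_of_ge (h𝒞.isTop_univ D) hD.lt

lemma isTop_tree_univ : IsTop (ClusterVertex.tree ⟨Set.univ, h𝒞.2.1⟩) := by
  intro v
  rcases (h𝒞.isTop_univ v.cluster).lt_or_eq with hlt | heq
  · exact ClusterVertex.le_iff.2 (.inl hlt)
  · refine ClusterVertex.le_iff.2 (.inr ⟨heq, ?_⟩)
    cases hv : v.hybrid
    · exact le_rfl
    · exact (h𝒞.not_isHybridCluster_univ (heq ▸ v.isHybridCluster_of_hybrid hv)).elim

def leafVertex (x : X) : ClusterVertex 𝒞 := .tree ⟨{x}, h𝒞.2.2 x⟩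

lemma leafVertex_injective : Function.Injective h𝒞.leafVertex := fun x y h => by
  simpa [leafVertex, ClusterVertex.tree] using
    congrArg (fun v : ClusterVertex 𝒞 => (v.cluster : Set X)) h

lemma leafVertex_le_iff {x : X} {v : ClusterVertex 𝒞} :
    h𝒞.leafVertex x ≤ v ↔ x ∈ (v.cluster : Set X) := by
  simp only [ClusterVertex.le_iff, leafVertex, ClusterVertex.tree, Bool.false_le, and_true,
    ← Subtype.coe_lt_coe, Subtype.ext_iff]
  refine ⟨fun h => h.elim (fun hlt => hlt.le rfl) (· ▸ rfl), fun hx => ?_⟩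
  rcases eq_or_ne {x} (v.cluster : Set X) with heq | hne
  · exact .inr heq
  · exact .inl ((Set.singleton_subset_iff.2 hx).ssubset_of_ne hne)

lemma isMin_iff {v : ClusterVertex 𝒞} : IsMin v ↔ ∃ x, h𝒞.leafVertex x = v := by
  have nonempty (w : ClusterVertex 𝒞) : (w.cluster : Set X).Nonempty :=
    Set.nonempty_iff_ne_empty.2 fun h => h𝒞.1 (h ▸ w.cluster.2)
  constructor
  · intro hv
    obtain ⟨x, hx⟩ := nonempty v
    exact ⟨x, le_antisymm (h𝒞.leafVertex_le_iff.2 hx) (hv (h𝒞.leafVertex_le_iff.2 hx))⟩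
  · rintro ⟨x, rfl⟩ w hw
    obtain ⟨y, hy⟩ := nonempty w
    have hyx : y = x := ClusterVertex.cluster_mono hw hy
    exact h𝒞.leafVertex_le_iff.2 (hyx ▸ hy)

end IsClusteringSystem

variable [Finite X]

noncomputable abbrev canonicalNetwork (h𝒞 : IsClusteringSystem 𝒞) : Network X :=
  hasseNetwork (ClusterVertex 𝒞) h𝒞.leafVertex h𝒞.leafVertex_injective
    ⟨_, h𝒞.isTop_tree_univ.isMax, fun _ => h𝒞.isTop_tree_univ.isMax_iff.1⟩ fun _ => h𝒞.isMin_iff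

variable (h𝒞 : IsClusteringSystem 𝒞)

lemma canonicalNetwork_reach {u v : ClusterVertex 𝒞} :
    (canonicalNetwork h𝒞).reach u v ↔ v ≤ u :=
  hasseNetwork_reach

lemma canonicalNetwork_cluster (v : ClusterVertex 𝒞) :
    (canonicalNetwork h𝒞).cluster v = v.cluster :=
  (hasseNetwork_cluster v).trans (Set.ext fun _ => h𝒞.leafVertex_le_iff)

lemma canonicalNetwork_CS : (canonicalNetwork h𝒞).CS = 𝒞 := by
  ext C
  refine ⟨fun ⟨v, hv⟩ => ?_, fun hC => ⟨.tree ⟨C, hC⟩, canonicalNetwork_cluster h𝒞 _⟩⟩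
  rw [← hv, canonicalNetwork_cluster]
  exact v.cluster.2

lemma canonicalNetwork_isHybrid_iff {v : ClusterVertex 𝒞} :
    (canonicalNetwork h𝒞).IsHybrid v ↔ v.hybrid = true := by
  change 1 < {u : ClusterVertex 𝒞 | v ⋖ u}.ncard ↔ _
  rw [Set.one_lt_ncard (Set.toFinite _)]
  refine ⟨fun ⟨a, ha, b, hb, hab⟩ => ?_, fun hv => ?_⟩
  · by_contra hv
    exact hab (ClusterVertex.subsingleton_covBy (by simpa using hv) ha hb)
  · obtain ⟨a, b, ha, hb, hab⟩ := ClusterVertex.exists_covBy_ne hv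
    exact ⟨a, ha, b, hb, hab⟩

lemma canonicalNetwork_clusterNetwork : (canonicalNetwork h𝒞).ClusterNetwork := by
  refine ⟨fun u v => ?_, fun u v => ?_, fun u v hvu => ?_, fun v hv => ?_⟩
  · simp only [canonicalNetwork_reach, canonicalNetwork_cluster, Subtype.coe_le_coe]
    exact or_comm.trans ClusterVertex.le_or_le_iff
  · simp only [canonicalNetwork_cluster, canonicalNetwork_isHybrid_iff, Subtype.coe_inj]
    exact ClusterVertex.cluster_eq_iff
  · rintro ⟨w, huw, hwv⟩
    simp only [canonicalNetwork_cluster, Subtype.coe_lt_coe] at huw hwv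
    rcases ClusterVertex.covBy_iff.1 hvu with ⟨heq, -⟩ | ⟨hcov, -⟩
    · exact (huw.trans (heq ▸ hwv)).ne rfl
    · exact hcov.2 huw hwv
  · rw [canonicalNetwork_isHybrid_iff] at hv
    refine ⟨.tree v.cluster, ClusterVertex.covBy_iff.2 (.inl ⟨rfl, rfl, hv⟩),
      fun w hw => ClusterVertex.eq_tree_of_covBy hw hv, ?_⟩
    rw [Network.isTreeVertex_iff_not_isHybrid, canonicalNetwork_isHybrid_iff]
    exact Bool.false_ne_true

end CanonicalNetwork

namespace Network

variable {N : Network X}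

def clusterCS (N : Network X) (v : N.V) : N.CS := ⟨N.cluster v, v, rfl⟩

lemma PCC.reach_of_cluster_ssubset (hN : N.PCC) {u v : N.V} (h : N.cluster v ⊂ N.cluster u) :
    N.reach u v :=
  ((hN u v).2 (.inr h.subset)).resolve_right fun hvu =>
    h.not_subset (N.cluster_subset_of_reach hvu)

namespace ClusterNetwork

variable (hN : N.ClusterNetwork)
include hN

lemma exists_unique_child {v : N.V} (hv : N.IsHybrid v) :
    ∃ u, N.E v u ∧ (∀ w, N.E v w → w = u) ∧ ¬ N.IsHybrid u := by
  obtain ⟨u, hu, huniq, htree⟩ := hN.2.2.2 v hv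
  exact ⟨u, hu, huniq, N.isTreeVertex_iff_not_isHybrid.1 htree⟩

lemma cluster_eq_of_isHybrid {u v : N.V} (huv : N.E u v) (hu : N.IsHybrid u) :
    N.cluster u = N.cluster v := by
  obtain ⟨w, hw, huniq, -⟩ := hN.exists_unique_child hu
  exact huniq v huv ▸ N.cluster_eq_of_unique_child hw huniq

lemma isHybrid_of_arc_of_cluster_eq {u v : N.V} (huv : N.E u v)
    (heq : N.cluster u = N.cluster v) : N.IsHybrid u ∧ ¬ N.IsHybrid v := by
  rcases (hN.2.1 u v).1 heq with rfl | ⟨-, hvu⟩ | ⟨hu, -⟩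
  · exact (N.ne_of_arc huv rfl).elim
  · exact (N.acyclic u v huv (.single hvu)).elim
  · obtain ⟨w, -, huniq, hw⟩ := hN.exists_unique_child hu
    exact ⟨hu, huniq v huv ▸ hw⟩

lemma covBy_of_arc {u v : N.V} (huv : N.E u v) (hne : N.cluster v ≠ N.cluster u) :
    N.clusterCS v ⋖ N.clusterCS u :=
  ⟨(N.cluster_subset_of_arc huv).ssubset_of_ne hne,
    fun ⟨_, w, hw⟩ hvw hwu => hN.2.2.1 v u huv ⟨w, hw ▸ hvw, hw ▸ hwu⟩⟩

lemma isHybridCluster_clusterCS {v : N.V} (hv : N.IsHybrid v) :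
    IsHybridCluster (N.clusterCS v) := by
  obtain ⟨p, q, hp, hq, hpq⟩ := N.exists_parents_of_isHybrid hv
  have cover {p} (hp : N.E p v) : N.clusterCS v ⋖ N.clusterCS p :=
    hN.covBy_of_arc hp fun h => (hN.isHybrid_of_arc_of_cluster_eq hp h.symm).2 hv
  refine ⟨_, _, cover hp, cover hq, fun h => ?_⟩
  rcases (hN.2.1 p q).1 (congrArg Subtype.val h) with rfl | ⟨hq', hqp⟩ | ⟨hp', hpq'⟩
  · exact hpq rfl
  · obtain ⟨w, -, huniq, -⟩ := hN.exists_unique_child hq'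
    exact N.ne_of_arc hp ((huniq p hqp).trans (huniq v hq).symm)
  · obtain ⟨w, -, huniq, -⟩ := hN.exists_unique_child hp'
    exact N.ne_of_arc hq ((huniq q hpq').trans (huniq v hp).symm)

open Classical in
noncomputable def toClusterVertex (v : N.V) : ClusterVertex N.CS :=
  ⟨N.clusterCS v, decide (N.IsHybrid v),
    fun h => hN.isHybridCluster_clusterCS (of_decide_eq_true h)⟩

lemma reach_iff {u v : N.V} :
    N.reach u v ↔ hN.toClusterVertex v ≤ hN.toClusterVertex u := by
  simp only [ClusterVertex.le_iff, toClusterVertex, Subtype.ext_iff, Bool.le_iff_imp,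
    decide_eq_true_eq]
  constructor
  · intro h
    by_cases heq : N.cluster v = N.cluster u
    · refine .inr ⟨heq, fun hv => ?_⟩
      rcases (hN.2.1 u v).1 heq.symm with rfl | ⟨-, hvu⟩ | ⟨hu, -⟩
      · exact hv
      · exact (N.acyclic v u hvu h).elim
      · exact hu
    · exact .inl ((N.cluster_subset_of_reach h).ssubset_of_ne heq)
  · rintro (hlt | ⟨heq, himp⟩)
    · exact hN.1.reach_of_cluster_ssubset hlt
    · rcases (hN.2.1 u v).1 heq.symm with rfl | ⟨hv, hvu⟩ | ⟨-, huv⟩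
      · exact .refl
      · exact ((hN.isHybrid_of_arc_of_cluster_eq hvu heq).2 (himp hv)).elim
      · exact .single huv

lemma shortcutFree : N.ShortcutFree := by
  rintro v u ⟨hvu, w, hvw, hwu, hreach⟩
  by_cases hwu' : N.cluster w = N.cluster u
  · rcases (hN.2.1 w u).1 hwu' with rfl | ⟨-, huw⟩ | ⟨-, hwu''⟩
    · exact hwu rfl
    · exact N.acyclic u w huw hreach
    · exact N.ne_of_arc hvw <|
        N.parent_unique (hN.isHybrid_of_arc_of_cluster_eq hwu'' hwu').2 hvu hwu''
  · have hvw' : N.cluster v = N.cluster w := by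
      by_contra hne
      exact hN.2.2.1 u v hvu ⟨w, (N.cluster_subset_of_reach hreach).ssubset_of_ne (Ne.symm hwu'),
        (N.cluster_subset_of_arc hvw).ssubset_of_ne (Ne.symm hne)⟩
    obtain ⟨c, -, huniq, -⟩ := hN.exists_unique_child (hN.isHybrid_of_arc_of_cluster_eq hvw hvw').1
    exact hwu ((huniq w hvw).trans (huniq u hvu).symm)

lemma exists_not_isHybrid_cluster_eq (v : N.V) :
    ∃ t, N.cluster t = N.cluster v ∧ ¬ N.IsHybrid t := by
  by_cases hv : N.IsHybrid v
  · obtain ⟨u, hvu, -, hu⟩ := hN.exists_unique_child hv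
    exact ⟨u, (hN.cluster_eq_of_isHybrid hvu hv).symm, hu⟩
  · exact ⟨v, rfl, hv⟩

lemma exists_parent_of_covBy {t : N.V} {D : N.CS} (hD : N.clusterCS t ⋖ D) :
    ∃ p, N.E p t ∧ (N.cluster p = N.cluster t ∨ N.clusterCS p = D) := by
  obtain ⟨_, w, rfl⟩ := D
  rcases Relation.ReflTransGen.cases_tail (hN.1.reach_of_cluster_ssubset hD.lt) with
    rfl | ⟨p, hwp, hpt⟩
  · exact (hD.lt.ne rfl).elim
  refine ⟨p, hpt, or_iff_not_imp_left.2 fun hpt' => Subtype.ext ?_⟩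
  by_contra hpw
  exact hD.2 (c := N.clusterCS p) ((N.cluster_subset_of_arc hpt).ssubset_of_ne (Ne.symm hpt'))
    ((N.cluster_subset_of_reach hwp).ssubset_of_ne hpw)

lemma exists_isHybrid_of_isHybridCluster {v : N.V} (hv : IsHybridCluster (N.clusterCS v)) :
    ∃ h, N.IsHybrid h ∧ N.cluster h = N.cluster v := by
  obtain ⟨t, htv, ht⟩ := hN.exists_not_isHybrid_cluster_eq v
  obtain ⟨D₁, D₂, h₁, h₂, hD⟩ := hv
  have htv' : N.clusterCS t = N.clusterCS v := Subtype.ext htv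
  obtain ⟨p₁, hp₁, hc₁ | hc₁⟩ := hN.exists_parent_of_covBy (htv' ▸ h₁)
  · exact ⟨p₁, (hN.isHybrid_of_arc_of_cluster_eq hp₁ hc₁).1, hc₁.trans htv⟩
  obtain ⟨p₂, hp₂, hc₂ | hc₂⟩ := hN.exists_parent_of_covBy (htv' ▸ h₂)
  · exact ⟨p₂, (hN.isHybrid_of_arc_of_cluster_eq hp₂ hc₂).1, hc₂.trans htv⟩
  -- Otherwise `D₁` and `D₂` are clusters of parents of the tree vertex `t`, which coincide.
  exact (hD (hc₁.symm.trans ((congrArg N.clusterCS (N.parent_unique ht hp₁ hp₂)).trans hc₂))).elim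

lemma toClusterVertex_injective : Function.Injective hN.toClusterVertex :=
  fun _ _ h => N.reach_antisymm (hN.reach_iff.2 h.ge) (hN.reach_iff.2 h.le)

lemma toClusterVertex_surjective : Function.Surjective hN.toClusterVertex := by
  rintro ⟨⟨_, v, rfl⟩, b, hb⟩
  cases b
  · obtain ⟨t, htv, ht⟩ := hN.exists_not_isHybrid_cluster_eq v
    exact ⟨t, ClusterVertex.ext (Subtype.ext htv) (by simpa [toClusterVertex] using ht)⟩
  · obtain ⟨h, hh, hhv⟩ := hN.exists_isHybrid_of_isHybridCluster (hb rfl)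
    exact ⟨h, ClusterVertex.ext (Subtype.ext hhv) (by simpa [toClusterVertex] using hh)⟩

lemma toClusterVertex_leafEmb (h : IsClusteringSystem N.CS) (x : X) :
    hN.toClusterVertex (N.leafEmb x) = h.leafVertex x := by
  refine ClusterVertex.ext (Subtype.ext (N.cluster_leafEmb x)) ?_
  have hleaf : ¬ N.IsHybrid (N.leafEmb x) := fun hx =>
    let ⟨u, hu, _⟩ := hN.exists_unique_child hx
    N.not_arc_leafEmb x u hu
  simpa [toClusterVertex, IsClusteringSystem.leafVertex, ClusterVertex.tree] using hleaf

theorem isomorphic_canonicalNetwork [Finite X] (h : IsClusteringSystem N.CS) :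
    (canonicalNetwork h).Isomorphic N := by
  let e := Equiv.ofBijective _ ⟨hN.toClusterVertex_injective, hN.toClusterVertex_surjective⟩
  refine .of_reach_equiv hasseNetwork_shortcutFree hN.shortcutFree e.symm (fun a b => ?_) ?_
  · rw [canonicalNetwork_reach, hN.reach_iff]
    change b ≤ a ↔ e (e.symm b) ≤ e (e.symm a)
    rw [e.apply_symm_apply, e.apply_symm_apply]
  · intro x
    rw [Equiv.symm_apply_eq]
    exact (hN.toClusterVertex_leafEmb h x).symm

end ClusterNetwork

lemma Separated.exists_unique_child (hN : N.Separated) {v : N.V} (hv : N.IsHybrid v) :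
    ∃ u, N.E v u ∧ ∀ w, N.E v w → w = u := by
  obtain ⟨u, hu⟩ := Set.ncard_eq_one.1 (hN v hv)
  exact ⟨u, hu.symm.subset rfl, fun w hw => hu.subset hw⟩

namespace SemiRegular

variable (hN : N.SemiRegular)
include hN

lemma eq_of_arc_of_cluster_eq {a b w : N.V} (hab : N.E a b) (heq : N.cluster a = N.cluster b)
    (haw : N.E a w) : w = b := by
  by_contra hne
  rcases (hN.2 b w).2 (.inr (heq ▸ N.cluster_subset_of_arc haw)) with hbw | hwb
  · exact hN.1 a w ⟨haw, b, hab, fun h => hne h.symm, hbw⟩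
  · exact hN.1 a b ⟨hab, w, haw, hne, hwb⟩

lemma isHybrid_of_arc_of_cluster_eq (hPhy : N.Phylogenetic) {a b : N.V} (hab : N.E a b)
    (heq : N.cluster a = N.cluster b) : N.IsHybrid a := by
  by_contra ha
  refine hPhy ⟨a, Set.ncard_eq_one.2 ⟨b, ?_⟩, not_lt.1 ha⟩
  exact Set.eq_singleton_iff_unique_mem.2 ⟨hab, fun w => hN.eq_of_arc_of_cluster_eq hab heq⟩

lemma not_isHybrid_of_unique_child {v w : N.V} (hvw : N.E v w)
    (huniq : ∀ w', N.E v w' → w' = w) : ¬ N.IsHybrid w := by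
  intro hw
  obtain ⟨p, hpw, hpv⟩ : ∃ p, N.E p w ∧ p ≠ v := by
    obtain ⟨p, q, hp, hq, hpq⟩ := N.exists_parents_of_isHybrid hw
    by_cases hpv : p = v
    · exact ⟨q, hq, fun h => hpq (hpv.trans h.symm)⟩
    · exact ⟨p, hp, hpv⟩
  have hvp : N.cluster v ⊆ N.cluster p :=
    N.cluster_eq_of_unique_child hvw huniq ▸ N.cluster_subset_of_arc hpw
  rcases (hN.2 p v).2 (.inr hvp) with hpv' | hvp'
  · rcases Relation.ReflTransGen.cases_head hpv' with rfl | ⟨c, hpc, hcv⟩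
    · exact hpv rfl
    · refine hN.1 p w ⟨hpw, c, hpc, fun hcw => ?_, hcv.tail hvw⟩
      exact N.acyclic v w hvw (hcw ▸ hcv)
  · rcases Relation.ReflTransGen.cases_head hvp' with rfl | ⟨c, hvc, hcp⟩
    · exact hpv rfl
    · exact N.acyclic p w hpw (huniq c hvc ▸ hcp)

lemma isHybrid_and_arc_of_reach (hPhy : N.Phylogenetic) {v u : N.V} (hvu : N.reach v u)
    (heq : N.cluster v = N.cluster u) (hne : v ≠ u) : N.IsHybrid v ∧ N.E v u := by
  have squeeze {a b} (hab : N.E a b) (hbu : N.reach b u) (ha : N.cluster a = N.cluster u) :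
      N.cluster a = N.cluster b :=
    (N.cluster_subset_of_arc hab).antisymm' (ha ▸ N.cluster_subset_of_reach hbu)
  rcases Relation.ReflTransGen.cases_head hvu with rfl | ⟨w, hvw, hwu⟩
  · exact (hne rfl).elim
  have hvw' := squeeze hvw hwu heq
  have huniq (w') := hN.eq_of_arc_of_cluster_eq (w := w') hvw hvw'
  refine ⟨hN.isHybrid_of_arc_of_cluster_eq hPhy hvw hvw', ?_⟩
  rcases Relation.ReflTransGen.cases_head hwu with rfl | ⟨w₂, hww₂, hw₂u⟩
  · exact hvw
  · exact (hN.not_isHybrid_of_unique_child hvw huniq <|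
      hN.isHybrid_of_arc_of_cluster_eq hPhy hww₂ (squeeze hww₂ hw₂u (hvw' ▸ heq))).elim

lemma not_exists_cluster_between {u v : N.V} (hvu : N.E v u) :
    ¬ ∃ w, N.cluster u ⊂ N.cluster w ∧ N.cluster w ⊂ N.cluster v := by
  rintro ⟨w, huw, hwv⟩
  rcases Relation.ReflTransGen.cases_head (hN.2.reach_of_cluster_ssubset hwv) with
    rfl | ⟨c, hvc, hcw⟩
  · exact hwv.ne rfl
  refine hN.1 v u ⟨hvu, c, hvc, ?_, hcw.trans (hN.2.reach_of_cluster_ssubset huw)⟩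
  rintro rfl
  exact huw.not_subset (N.cluster_subset_of_reach hcw)

theorem clusterNetwork (hSep : N.Separated) (hPhy : N.Phylogenetic) : N.ClusterNetwork := by
  refine ⟨hN.2, fun u v => ⟨fun heq => ?_, ?_⟩, fun u v => hN.not_exists_cluster_between,
    fun v hv => ?_⟩
  · rcases eq_or_ne u v with rfl | hne
    · exact .inl rfl
    rcases (hN.2 u v).2 (.inl heq.subset) with huv | hvu
    · exact .inr (.inr (hN.isHybrid_and_arc_of_reach hPhy huv heq hne))
    · exact .inr (.inl (hN.isHybrid_and_arc_of_reach hPhy hvu heq.symm hne.symm))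
  · rintro (rfl | ⟨hv, hvu⟩ | ⟨hu, huv⟩)
    · rfl
    · obtain ⟨w, hvw, huniq⟩ := hSep.exists_unique_child hv
      exact (huniq u hvu ▸ N.cluster_eq_of_unique_child hvw huniq).symm
    · obtain ⟨w, huw, huniq⟩ := hSep.exists_unique_child hu
      exact huniq v huv ▸ N.cluster_eq_of_unique_child huw huniq
  · obtain ⟨u, hvu, huniq⟩ := hSep.exists_unique_child hv
    exact ⟨u, hvu, huniq, N.isTreeVertex_iff_not_isHybrid.2
      (hN.not_isHybrid_of_unique_child hvu huniq)⟩

end SemiRegular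

end Network

/-- For every clustering system there is a cluster network with
this clustering system, unique up to a digraph isomorphism fixing all leaves;
equivalently, it is the unique semi-regular, separated, phylogenetic network
with this clustering system. -/
theorem exists_unique_clusterNetwork (X : Type) [Fintype X] (𝒞 : Set (Set X))
    (h𝒞 : IsClusteringSystem 𝒞) :
    ∃ N : Network X, N.ClusterNetwork ∧ N.CS = 𝒞 ∧
      (∀ N' : Network X, N'.ClusterNetwork → N'.CS = 𝒞 → N.Isomorphic N') ∧
      (∀ N' : Network X, N'.SemiRegular → N'.Separated → N'.Phylogenetic →
        N'.CS = 𝒞 → N.Isomorphic N') := by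
  have unique (N : Network X) (hN : N.ClusterNetwork) (hCS : N.CS = 𝒞) :
      (canonicalNetwork h𝒞).Isomorphic N := by
    subst hCS
    exact hN.isomorphic_canonicalNetwork h𝒞
  exact ⟨canonicalNetwork h𝒞, canonicalNetwork_clusterNetwork h𝒞, canonicalNetwork_CS h𝒞, unique,
    fun N hSR hSep hPhy => unique N (hSR.clusterNetwork hSep hPhy)⟩

end PhyloNet
end

section
/- Every tree-child network satisfies (PCC), i.e., for all vertices u, v of a tree-child network N, u and v are ⪯_N-comparable if and only if C(u) ⊆ C(v) or C(v) ⊆ C(u). -/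
namespace PhyloNet

variable {X : Type}

/-!
From `u`, follow children of indegree 1, which exist at every non-leaf of a tree-child
network, down to a leaf `x`. Each vertex of this path other than `u` has its unique parent on
the path, so an ancestor of `x` either lies on the path below `u` or is an ancestor of `u`.
Hence if `C(u) ⊆ C(v)`, then `v`, an ancestor of `x ∈ C(u)`, is comparable with `u`.
-/

namespace Network

variable (N : Network X)

lemma wellFounded_child : WellFounded (fun a b : N.V => N.E b a) := by
  have : Std.Irrefl (Relation.TransGen fun a b : N.V => N.E b a) := by
    refine ⟨fun a h => ?_⟩
    obtain ⟨b, hab, hba⟩ := Relation.TransGen.tail'_iff.mp h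
    exact N.acyclic a b hba (Relation.reflTransGen_swap.mp hab)
  exact (Finite.wellFounded_of_trans_of_irrefl (Relation.TransGen fun a b : N.V => N.E b a)).mono
    fun _ _ h => .single h

variable {N}

lemma eq_of_E_of_inDeg_eq_one {p q c : N.V} (hc : N.inDeg c = 1) (hp : N.E p c)
    (hq : N.E q c) : p = q :=
  (Set.ncard_le_one_iff).mp hc.le hp hq

lemma reach_parent_of_reach_of_inDeg_eq_one {u c v : N.V} (huc : N.E u c)
    (hc : N.inDeg c = 1) (hv : N.reach v c) : v = c ∨ N.reach v u := by
  rcases hv.cases_tail with rfl | ⟨p, hvp, hpc⟩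
  · exact Or.inl rfl
  · exact Or.inr (eq_of_E_of_inDeg_eq_one hc hpc huc ▸ hvp)

lemma exists_leaf_reach_comparable (hTC : N.TreeChild) (u : N.V) :
    ∃ x : X, N.reach u (N.leafEmb x) ∧
      ∀ v : N.V, N.reach v (N.leafEmb x) → N.reach v u ∨ N.reach u v := by
  induction u using N.wellFounded_child.induction with
  | _ u ih =>
    by_cases hLeaf : N.IsLeaf u
    · obtain ⟨x, rfl⟩ := (N.leaf_iff u).mp hLeaf
      exact ⟨x, .refl, fun _ hv => Or.inl hv⟩
    obtain ⟨c, huc, hc⟩ := hTC u hLeaf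
    obtain ⟨x, hcx, hx⟩ := ih c huc
    refine ⟨x, .head huc hcx, fun v hv => ?_⟩
    rcases hx v hv with hvc | hcv
    · rcases reach_parent_of_reach_of_inDeg_eq_one huc hc hvc with rfl | hvu
      · exact Or.inr (.single huc)
      · exact Or.inl hvu
    · exact Or.inr (.head huc hcv)

lemma reach_or_reach_of_cluster_subset (hTC : N.TreeChild) {u v : N.V}
    (h : N.cluster u ⊆ N.cluster v) : N.reach u v ∨ N.reach v u := by
  obtain ⟨x, hux, hx⟩ := exists_leaf_reach_comparable hTC u
  exact (hx v (h hux)).symm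

end Network

theorem treeChild_implies_PCC_general (X : Type) (N : Network X)
    (hTC : N.TreeChild) :
    ∀ u v : N.V, (N.reach u v ∨ N.reach v u) ↔
      (N.cluster u ⊆ N.cluster v ∨ N.cluster v ⊆ N.cluster u) := by
  intro u v
  constructor
  · rintro (h | h)
    · exact Or.inr (N.cluster_subset_of_reach h)
    · exact Or.inl (N.cluster_subset_of_reach h)
  · rintro (h | h)
    · exact N.reach_or_reach_of_cluster_subset hTC h
    · exact (N.reach_or_reach_of_cluster_subset hTC h).symm

/-- Every tree-child network satisfies (PCC). -/
theorem treeChild_implies_PCC (X : Type) [Fintype X] (N : Network X)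
    (hTC : N.TreeChild) :
    ∀ u v : N.V, (N.reach u v ∨ N.reach v u) ↔
      (N.cluster u ⊆ N.cluster v ∨ N.cluster v ⊆ N.cluster u) :=
  treeChild_implies_PCC_general X N hTC

end PhyloNet
end

section
/- Let N be a tree-child network and let u, v be ⪯_N-incomparable vertices of N. Then either C(u) ∩ C(v) = C(h) for some hybrid vertex h of N, or C(u) ∩ C(v) ∉ 𝒞_N. -/
namespace PhyloNet

variable {X : Type}

/-! Suppose `C(u) ∩ C(v) = C(w)`. Descending from `w` through tree children reaches a leaf `x`
along a path whose vertices below `w` have indegree 1, so every ancestor of `x` is either an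
ancestor of `w` or lies on that path, and the vertices on the path are comparable with all
ancestors of `x`. As `u` and `v` are incomparable, both are ancestors of `w`. If `w` is not
hybrid, its unique parent is again a common descendant of `u` and `v` with the same cluster
`C(u) ∩ C(v)`; hence a `⪯`-maximal vertex with this cluster is hybrid. -/

lemma wellFounded_of_not_transGen_self {α : Type*} [Finite α] {r : α → α → Prop}
    (h : ∀ a, ¬ Relation.TransGen r a a) : WellFounded r :=
  have : IsTrans α (Relation.TransGen r) := ⟨fun _ _ _ => Relation.TransGen.trans⟩
  have : Std.Irrefl (Relation.TransGen r) := ⟨h⟩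
  Subrelation.wf Relation.TransGen.single (Finite.wellFounded_of_trans_of_irrefl _)

namespace Network

variable {N : Network X} {a b p u v w : N.V}

lemma cluster_anti (h : N.reach a b) : N.cluster b ⊆ N.cluster a :=
  fun _ hx => h.trans hx

lemma not_transGen_self (a : N.V) : ¬ Relation.TransGen N.E a a := fun h => by
  obtain ⟨b, hab, hba⟩ := Relation.TransGen.head'_iff.mp h
  exact N.acyclic a b hab hba

lemma wellFounded_E : WellFounded N.E :=
  wellFounded_of_not_transGen_self N.not_transGen_self

lemma wellFounded_swap_E : WellFounded (Function.swap N.E) :=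
  wellFounded_of_not_transGen_self fun a h => N.not_transGen_self a (Relation.transGen_swap.mp h)

lemma reach_parent_of_inDeg_le_one (hw : N.inDeg w ≤ 1) (hp : N.E p w) (ha : N.reach a w)
    (hne : a ≠ w) : N.reach a p := by
  obtain rfl | ⟨q, haq, hq⟩ := ha.cases_tail
  · exact absurd rfl hne
  · rwa [(Set.ncard_le_one (Set.toFinite _)).mp hw p hp q hq]

lemma TreeChild.exists_leaf_ancestors_comparable (hTC : N.TreeChild) (w : N.V) :
    ∃ x : X, N.reach w (N.leafEmb x) ∧ ∀ z, N.reach z (N.leafEmb x) →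
      N.reach z w ∨ ∀ y, N.reach y (N.leafEmb x) → N.reach y z ∨ N.reach z y := by
  induction w using N.wellFounded_swap_E.induction with
  | _ w ih =>
    by_cases hleaf : N.IsLeaf w
    · obtain ⟨x, rfl⟩ := (N.leaf_iff w).mp hleaf
      exact ⟨x, .refl, fun z hz => .inl hz⟩
    obtain ⟨c, hwc, hc⟩ := hTC w hleaf
    obtain ⟨x, hcx, hx⟩ := ih c hwc
    refine ⟨x, .head hwc hcx, fun z hz => ?_⟩
    rcases hx z hz with hzc | hz_chain
    · by_cases hzc_eq : z = c
      · subst hzc_eq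
        exact .inr fun y hy => (hx y hy).elim .inl fun hy_chain => (hy_chain z hcx).symm
      · exact .inl (reach_parent_of_inDeg_le_one hc.le hwc hzc hzc_eq)
    · exact .inr hz_chain

lemma TreeChild.reach_of_cluster_subset_inter (hTC : N.TreeChild) (huv : ¬ N.reach u v)
    (hvu : ¬ N.reach v u) (hw : N.cluster w ⊆ N.cluster u ∩ N.cluster v) :
    N.reach u w ∧ N.reach v w := by
  obtain ⟨x, hwx, hx⟩ := hTC.exists_leaf_ancestors_comparable w
  obtain ⟨hux, hvx⟩ := hw hwx
  have reach_w : ∀ a b, ¬ N.reach a b → ¬ N.reach b a → N.reach a (N.leafEmb x) →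
      N.reach b (N.leafEmb x) → N.reach a w := fun a b hab hba hax hbx =>
    (hx a hax).resolve_right fun ha_chain => (ha_chain b hbx).elim hba hab
  exact ⟨reach_w u v huv hvu hux hvx, reach_w v u hvu huv hvx hux⟩

lemma TreeChild.exists_isHybrid_cluster_eq_inter (hTC : N.TreeChild) (huv : ¬ N.reach u v)
    (hvu : ¬ N.reach v u) (hw : N.cluster w = N.cluster u ∩ N.cluster v) :
    ∃ h, N.IsHybrid h ∧ N.cluster u ∩ N.cluster v = N.cluster h := by
  obtain ⟨m, hm, hmax⟩ :=
    N.wellFounded_E.has_min {w | N.cluster w = N.cluster u ∩ N.cluster v} ⟨w, hw⟩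
  refine ⟨m, not_le.mp fun hm_tree => ?_, hm.symm⟩
  obtain ⟨hum, hvm⟩ := hTC.reach_of_cluster_subset_inter huv hvu hm.le
  have hu_ne : u ≠ m := by rintro rfl; exact hvu hvm
  have hv_ne : v ≠ m := by rintro rfl; exact huv hum
  obtain ⟨p, hp⟩ : ∃ p, N.E p m := by
    obtain rfl | ⟨p, -, hp⟩ := hum.cases_tail
    exacts [absurd rfl hu_ne, ⟨p, hp⟩]
  refine hmax p (Set.Subset.antisymm ?_ (hm ▸ cluster_anti (.single hp))) hp
  exact Set.subset_inter (cluster_anti (reach_parent_of_inDeg_le_one hm_tree hp hum hu_ne))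
    (cluster_anti (reach_parent_of_inDeg_le_one hm_tree hp hvm hv_ne))

end Network

theorem treeChild_incomparable_intersection_general (X : Type)
    (N : Network X) (hTC : N.TreeChild) (u v : N.V)
    (h₁ : ¬ N.reach u v) (h₂ : ¬ N.reach v u) :
    (∃ h : N.V, N.IsHybrid h ∧ N.cluster u ∩ N.cluster v = N.cluster h) ∨
      N.cluster u ∩ N.cluster v ∉ N.CS := by
  refine or_iff_not_imp_right.mpr fun hCS => ?_
  obtain ⟨w, hw⟩ := not_not.mp hCS
  exact hTC.exists_isHybrid_cluster_eq_inter h₁ h₂ hw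

/-- In a tree-child network, the intersection of the clusters of
two incomparable vertices is either the cluster of a hybrid vertex or not a
cluster of the network at all. -/
theorem treeChild_incomparable_intersection (X : Type) [Fintype X]
    (N : Network X) (hTC : N.TreeChild) (u v : N.V)
    (h₁ : ¬ N.reach u v) (h₂ : ¬ N.reach v u) :
    (∃ h : N.V, N.IsHybrid h ∧ N.cluster u ∩ N.cluster v = N.cluster h) ∨
      N.cluster u ∩ N.cluster v ∉ N.CS :=
  treeChild_incomparable_intersection_general X N hTC u v h₁ h₂

end PhyloNet
end

section
/- A clustering system 𝒞 satisfies property (L) if and only if its intersection closure 𝓘(𝒞) satisfies property (L). -/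
namespace PhyloNet

variable {X : Type}

/-! Call `A` uniform for a family `𝒟` if all members of `𝒟` overlapping `A` cut `A` in the same
set; (L) says that every cluster is uniform for `𝒞`. Uniformity passes from `𝒟` to `𝓘(𝒟)`: if `A`
overlaps `⋂₀ T`, it overlaps some `D ∈ T`, and then `A ∩ ⋂₀ T = A ∩ D`. So it suffices to show that
every `A = ⋂₀ S ∈ 𝓘(𝒞)` is uniform for `𝒞`. For `D, D' ∈ 𝒞` overlapping `A`, pick `C, C' ∈ S`
overlapping `D, D'`; uniformity of `D` and `D'` for `𝓘(𝒞)` gives `A ∩ D = C ∩ D` and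
`A ∩ D' = C' ∩ D'`, and (L) in `𝒞` equates these once one checks how `C, C', D, D'` are nested. -/

open Set

section PropertyL

variable {𝒞 𝒟 T : Set (Set X)} {A B C C' D D' : Set X}

namespace Overlap

lemma nonempty (h : Overlap A B) : (A ∩ B).Nonempty := h.1

lemma not_subset_left (h : Overlap A B) : ¬ A ⊆ B := fun hAB => h.2.1 (inter_eq_left.2 hAB)

lemma not_subset_right (h : Overlap A B) : ¬ B ⊆ A := fun hBA => h.2.2 (inter_eq_right.2 hBA)

lemma symm (h : Overlap A B) : Overlap B A :=
  ⟨inter_comm A B ▸ h.nonempty, fun hB => h.not_subset_right (inter_eq_left.1 hB),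
    fun hA => h.not_subset_left (inter_eq_right.1 hA)⟩

end Overlap

lemma subset_or_subset_or_overlap (h : (A ∩ B).Nonempty) : A ⊆ B ∨ B ⊆ A ∨ Overlap A B := by
  by_cases hAB : A ⊆ B
  · exact .inl hAB
  by_cases hBA : B ⊆ A
  · exact .inr (.inl hBA)
  exact .inr (.inr ⟨h, mt inter_eq_left.1 hAB, mt inter_eq_right.1 hBA⟩)

lemma exists_overlap_of_overlap_sInter (h : Overlap A (⋂₀ T)) : ∃ D ∈ T, Overlap A D := by
  by_contra! hT
  refine h.not_subset_left (subset_sInter fun D hD => ?_)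
  have hAD : (A ∩ D).Nonempty :=
    h.nonempty.mono (inter_subset_inter_right _ (sInter_subset_of_mem hD))
  rcases subset_or_subset_or_overlap hAD with hAD | hDA | hAD
  · exact hAD
  · exact absurd ((sInter_subset_of_mem hD).trans hDA) h.not_subset_right
  · exact absurd hAD (hT D hD)

lemma mem_interClosure (hC : C ∈ 𝒞) (hne : C.Nonempty) : C ∈ interClosure 𝒞 :=
  ⟨hne, {C}, singleton_subset_iff.2 hC, singleton_nonempty C, (sInter_singleton C).symm⟩

def UniformOverlaps (𝒟 : Set (Set X)) (A : Set X) : Prop :=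
  ∀ D ∈ 𝒟, ∀ D' ∈ 𝒟, Overlap A D → Overlap A D' → A ∩ D = A ∩ D'

lemma PropertyL.uniformOverlaps (hL : PropertyL 𝒞) (hA : A ∈ 𝒞) : UniformOverlaps 𝒞 A :=
  hL A hA

namespace UniformOverlaps

lemma inter_sInter_eq (hA : UniformOverlaps 𝒟 A) (hT : T ⊆ 𝒟) (hAT : Overlap A (⋂₀ T))
    (hDT : D ∈ T) (hAD : Overlap A D) : A ∩ ⋂₀ T = A ∩ D := by
  refine (inter_subset_inter_right _ (sInter_subset_of_mem hDT)).antisymm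
    fun x hx => ⟨hx.1, mem_sInter.2 fun D' hD'T => ?_⟩
  have hAD' : (A ∩ D').Nonempty :=
    hAT.nonempty.mono (inter_subset_inter_right _ (sInter_subset_of_mem hD'T))
  rcases subset_or_subset_or_overlap hAD' with hAD' | hD'A | hAD'
  · exact hAD' hx.1
  · exact absurd ((sInter_subset_of_mem hD'T).trans hD'A) hAT.not_subset_right
  · rw [hA D (hT hDT) D' (hT hD'T) hAD hAD'] at hx
    exact hx.2

lemma interClosure (hA : UniformOverlaps 𝒟 A) : UniformOverlaps (interClosure 𝒟) A := by
  rintro _ ⟨-, T, hT, -, rfl⟩ _ ⟨-, T', hT', -, rfl⟩ hAT hAT'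
  obtain ⟨D, hDT, hAD⟩ := exists_overlap_of_overlap_sInter hAT
  obtain ⟨D', hD'T', hAD'⟩ := exists_overlap_of_overlap_sInter hAT'
  rw [hA.inter_sInter_eq hT hAT hDT hAD, hA.inter_sInter_eq hT' hAT' hD'T' hAD']
  exact hA D (hT hDT) D' (hT' hD'T') hAD hAD'

end UniformOverlaps

lemma PropertyL.inter_eq_inter_of_subset_of_overlap (hL : PropertyL 𝒞)
    (hC : C ∈ 𝒞) (hC' : C' ∈ 𝒞) (hD : D ∈ 𝒞) (hD' : D' ∈ 𝒞)
    (hAC : A ⊆ C) (hAC' : A ⊆ C') (hAD : Overlap A D) (hAD' : Overlap A D')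
    (hCD : Overlap C D) (hC'D' : Overlap C' D') : C ∩ D = C' ∩ D' := by
  rcases subset_or_subset_or_overlap (hAD.nonempty.mono (inter_subset_inter_left _ hAC'))
    with hC'D | hDC' | hC'D
  · exact absurd (hAC'.trans hC'D) hAD.not_subset_left
  · rcases subset_or_subset_or_overlap (hAD'.nonempty.mono (inter_subset_inter_left _ hAC))
      with hCD' | hD'C | hCD'
    · exact absurd (hAC.trans hCD') hAD'.not_subset_left
    -- Now `D ⊆ C'` and `D' ⊆ C`, so neither of `C`, `C'` can contain the other.
    · rcases subset_or_subset_or_overlap (hAD.nonempty.left.mono (subset_inter hAC hAC'))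
        with hCC' | hC'C | hCC'
      · exact absurd (hD'C.trans hCC') hC'D'.not_subset_right
      · exact absurd (hDC'.trans hC'C) hCD.not_subset_right
      · calc C ∩ D = C ∩ C' := hL C hC D hD C' hC' hCD hCC'
          _ = C' ∩ C := inter_comm C C'
          _ = C' ∩ D' := hL C' hC' C hC D' hD' hCC'.symm hC'D'
    · calc C ∩ D = C ∩ D' := hL C hC D hD D' hD' hCD hCD'
        _ = D' ∩ C := inter_comm C D'
        _ = D' ∩ C' := hL D' hD' C hC C' hC' hCD'.symm hC'D'.symm
        _ = C' ∩ D' := inter_comm D' C'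
  · calc C ∩ D = D ∩ C := inter_comm C D
      _ = D ∩ C' := hL D hD C hC C' hC' hCD.symm hC'D.symm
      _ = C' ∩ D := inter_comm D C'
      _ = C' ∩ D' := hL C' hC' D hD D' hD' hC'D hC'D'

lemma PropertyL.uniformOverlaps_of_mem_interClosure (hL : PropertyL 𝒞)
    (hA : A ∈ interClosure 𝒞) : UniformOverlaps 𝒞 A := by
  obtain ⟨-, S, hS, -, rfl⟩ := hA
  intro D hD D' hD' hSD hSD'
  obtain ⟨C, hCS, hDC⟩ := exists_overlap_of_overlap_sInter hSD.symm
  obtain ⟨C', hC'S, hD'C'⟩ := exists_overlap_of_overlap_sInter hSD'.symm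
  have hDS : D ∩ ⋂₀ S = D ∩ C := (hL.uniformOverlaps hD).inter_sInter_eq hS hSD.symm hCS hDC
  have hD'S : D' ∩ ⋂₀ S = D' ∩ C' :=
    (hL.uniformOverlaps hD').inter_sInter_eq hS hSD'.symm hC'S hD'C'
  rw [inter_comm, hDS, inter_comm _ D', hD'S, inter_comm D, inter_comm D']
  exact hL.inter_eq_inter_of_subset_of_overlap (hS hCS) (hS hC'S) hD hD'
    (sInter_subset_of_mem hCS) (sInter_subset_of_mem hC'S) hSD hSD' hDC.symm hD'C'.symm

lemma PropertyL.of_interClosure (hL : PropertyL (interClosure 𝒞)) : PropertyL 𝒞 :=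
  fun C₁ h₁ C₂ h₂ C₃ h₃ h₁₂ h₁₃ =>
    hL C₁ (mem_interClosure h₁ h₁₂.nonempty.left) C₂ (mem_interClosure h₂ h₁₂.nonempty.right)
      C₃ (mem_interClosure h₃ h₁₃.nonempty.right) h₁₂ h₁₃

lemma PropertyL.interClosure (hL : PropertyL 𝒞) : PropertyL (interClosure 𝒞) :=
  fun _ hA => (hL.uniformOverlaps_of_mem_interClosure hA).interClosure

end PropertyL

theorem propertyL_iff_interClosure_propertyL_general (X : Type)
    (𝒞 : Set (Set X)) :
    PropertyL 𝒞 ↔ PropertyL (interClosure 𝒞) :=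
  ⟨PropertyL.interClosure, PropertyL.of_interClosure⟩

/-- A clustering system satisfies (L) iff its intersection closure
satisfies (L). -/
theorem propertyL_iff_interClosure_propertyL (X : Type) [Fintype X]
    (𝒞 : Set (Set X)) (h𝒞 : IsClusteringSystem 𝒞) :
    PropertyL 𝒞 ↔ PropertyL (interClosure 𝒞) :=
  propertyL_iff_interClosure_propertyL_general X 𝒞

end PhyloNet
end
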